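/- Let w be a word of length n that is the concatenation of words w^1 of length v and w^2 of length n-v, and let d be the number of ascents of w among positions 1,...,v (i.e., ascents of the prefix (w_1,...,w_{v+1}) counted within the first v positions). Then revmaj(w) = (n-v)·d + revmaj(w^1) + revmaj(w^2). -/

import Mathlib

/-- The set of ascent positions of a word `w` (1-based): `Asc(w) = {1 ≤ i < n : w_i < w_{i+1}}`. -/
def ascSet (w : List ℕ) : Finset ℕ :=
  (Finset.Ico 1 w.length).filter fun i => w.getD (i - 1) 0 < w.getD i 0

/-- The reverse major index `revmaj(w) = Σ_{i ∈ Asc(w)} (n - i)`. -/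
def revmaj (w : List ℕ) : ℕ := ∑ i ∈ ascSet w, (w.length - i)

/-! An ascent of `a :: u` at a position `i + 1 ≥ 2` is an ascent of `u` at position `i`, with
the same weight `n - (i + 1) = |u| - i`. So peeling off the first letter of `w¹` reduces the
theorem to a single ascent at position `1`: in `w¹ ++ w²` it weighs `|w¹| + |w²|`, split as
`|w²|` towards `(n - v)·d` and `|w¹|` towards `revmaj(w¹)`. -/

def ascentsUpTo (w : List ℕ) (v : ℕ) : Finset ℕ :=
  (Finset.Icc 1 v).filter fun i => w.getD (i - 1) 0 < w.getD i 0

theorem ascSet_eq_ascentsUpTo_length (w : List ℕ) : ascSet w = ascentsUpTo w w.length := by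
  ext i
  simp only [ascSet, ascentsUpTo, Finset.mem_filter, Finset.mem_Ico, Finset.mem_Icc]
  constructor
  · rintro ⟨⟨hi1, hin⟩, hasc⟩
    exact ⟨⟨hi1, hin.le⟩, hasc⟩
  · rintro ⟨⟨hi1, hin⟩, hasc⟩
    refine ⟨⟨hi1, lt_of_le_of_ne hin fun h => ?_⟩, hasc⟩
    rw [h, List.getD_eq_default _ _ le_rfl] at hasc
    exact Nat.not_lt_zero _ hasc

theorem revmaj_eq_sum_ascentsUpTo (w : List ℕ) :
    revmaj w = ∑ i ∈ ascentsUpTo w w.length, (w.length - i) := by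
  rw [revmaj, ascSet_eq_ascentsUpTo_length]

theorem sum_ascentsUpTo_cons {M : Type*} [AddCommMonoid M] (a : ℕ) (u : List ℕ) (v : ℕ)
    (f : ℕ → M) :
    ∑ i ∈ ascentsUpTo (a :: u) (v + 1), f i =
      (if a < u.getD 0 0 then f 1 else 0) + ∑ i ∈ ascentsUpTo u v, f (i + 1) := by
  simp only [ascentsUpTo, Finset.sum_filter, ← Finset.Ico_add_one_right_eq_Icc,
    Finset.sum_Ico_eq_sum_range, Nat.add_sub_cancel, Finset.sum_range_succ']
  rw [add_comm]
  congr 1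
  refine Finset.sum_congr rfl fun k _ => ?_
  simp only [add_comm 1, Nat.add_sub_cancel, List.getD_cons_succ]

theorem revmaj_cons (a : ℕ) (u : List ℕ) :
    revmaj (a :: u) = (if a < u.getD 0 0 then u.length else 0) + revmaj u := by
  simp only [revmaj_eq_sum_ascentsUpTo, List.length_cons, sum_ascentsUpTo_cons,
    Nat.add_sub_cancel, Nat.add_sub_add_right]

theorem card_ascentsUpTo_cons (a : ℕ) (u : List ℕ) (v : ℕ) :
    (ascentsUpTo (a :: u) (v + 1)).card =
      (if a < u.getD 0 0 then 1 else 0) + (ascentsUpTo u v).card := by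
  simpa only [Finset.card_eq_sum_ones] using sum_ascentsUpTo_cons a u v fun _ => 1

/-- if `w = w¹ ++ w²` with `v = |w¹|`, `n = |w|`, and `d` is the number of
ascents of `w` among positions `1, …, v` (i.e. ascents of the prefix `(w_1, …, w_{v+1})`
counted within the first `v` positions), then
`revmaj(w) = (n - v)·d + revmaj(w¹) + revmaj(w²)`. -/
theorem revmaj_append (w1 w2 : List ℕ) :
    revmaj (w1 ++ w2) =
      w2.length *
        ((Finset.Icc 1 w1.length).filter
            (fun i => (w1 ++ w2).getD (i - 1) 0 < (w1 ++ w2).getD i 0)).card +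
      revmaj w1 + revmaj w2 := by
  change revmaj (w1 ++ w2) =
    w2.length * (ascentsUpTo (w1 ++ w2) w1.length).card + revmaj w1 + revmaj w2
  induction w1 with
  | nil => simp [ascentsUpTo, revmaj, ascSet]
  | cons a w1 ih =>
    have head_weight : (if a < (w1 ++ w2).getD 0 0 then w1.length else 0) =
        if a < w1.getD 0 0 then w1.length else 0 := by
      cases w1 <;> simp
    rw [List.cons_append, revmaj_cons, revmaj_cons, List.length_cons, card_ascentsUpTo_cons, ih,
      List.length_append, ← head_weight]
    split_ifs <;> ring
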